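/- arXiv:1501.04699 — 16 statements merged into one kernel-verified Lean document; each statement's English description precedes it below -/
import Mathlib

section
/- Let R be a commutative Bézout ring. If R/J(R) is π-regular, then R is feckly zero-adequate, i.e., for every a ∈ R there exist r, s ∈ R with r*s ∈ J(R), r*R + a*R = R, and for every non-invertible divisor s' of s, s'*R + a*R ≠ R. -/
open Ideal

/-- The Jacobson radical of a commutative ring, as an ideal. -/
abbrev jacR (R : Type*) [CommRing R] : Ideal R := (⊥ : Ideal R).jacobson

/-- An element `c` is adequate. -/
def Adequate {R : Type*} [CommRing R] (c : R) : Prop :=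
  ∀ a : R, ∃ r s : R, c = r * s ∧ (∃ x y : R, r * x + a * y = 1) ∧
    ∀ s' : R, s' ∣ s → ¬IsUnit s' → ¬∃ x y : R, s' * x + a * y = 1

/-- An element `c` is feckly adequate. -/
def FecklyAdequate {R : Type*} [CommRing R] (c : R) : Prop :=
  ∀ a : R, ∃ r s : R, c - r * s ∈ jacR R ∧ (∃ x y : R, r * x + a * y = 1) ∧
    ∀ s' : R, s' ∣ s → ¬IsUnit s' → ¬∃ x y : R, s' * x + a * y = 1

/-- Feckly zero-adequate: for every `a` there are `r, s` with `r*s ∈ J(R)`,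
`rR + aR = R`, and `s'R + aR ≠ R` for every non-invertible divisor `s'` of `s`. -/
def FecklyZeroAdequateBody (R : Type*) [CommRing R] : Prop :=
  ∀ a : R, ∃ r s : R, r * s ∈ jacR R ∧ (∃ x y : R, r * x + a * y = 1) ∧
    ∀ s' : R, s' ∣ s → ¬IsUnit s' → ¬∃ x y : R, s' * x + a * y = 1

/-- Zero-adequate body: same with `r*s = 0`. -/
def ZeroAdequateBody (R : Type*) [CommRing R] : Prop :=
  ∀ a : R, ∃ r s : R, r * s = 0 ∧ (∃ x y : R, r * x + a * y = 1) ∧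
    ∀ s' : R, s' ∣ s → ¬IsUnit s' → ¬∃ x y : R, s' * x + a * y = 1

/-- A feckly zero-adequate ring is a Bézout ring whose zero is feckly adequate. -/
def FecklyZeroAdequateRing (R : Type*) [CommRing R] : Prop :=
  IsBezout R ∧ FecklyZeroAdequateBody R

/-- π-regularity. -/
def PiRegular (S : Type*) [CommRing S] : Prop :=
  ∀ a : S, ∃ n : ℕ, 1 ≤ n ∧ ∃ b : S, a ^ n = a ^ n * b * a ^ n

/-- von Neumann regularity. -/
def VNRegular (S : Type*) [CommRing S] : Prop :=
  ∀ a : S, ∃ b : S, a = a * b * a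

/-- Idempotents lift modulo the Jacobson radical. -/
def IdempotentsLift (R : Type*) [CommRing R] : Prop :=
  ∀ x : R, x - x ^ 2 ∈ jacR R → ∃ e : R, e * e = e ∧ e - x ∈ jacR R

theorem stmt1 (R : Type*) [CommRing R] [IsBezout R]
    (h : PiRegular (R ⧸ jacR R)) : FecklyZeroAdequateBody R := by
  intro a
  obtain ⟨n, hn, b, hb⟩ := h (Ideal.Quotient.mk (jacR R) a)
  obtain ⟨b, rfl⟩ := Ideal.Quotient.mk_surjective b
  obtain ⟨m, rfl⟩ : ∃ m, n = m + 1 := ⟨n - 1, (Nat.succ_pred_eq_of_pos hn).symm⟩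
  have hJ : a ^ (m+1) - a ^ (m+1) * b * a ^ (m+1) ∈ jacR R := by
    refine Ideal.Quotient.eq.mp ?_
    simp only [_root_.map_mul, map_pow]
    exact hb
  refine ⟨1 - b * a ^ (m+1), a ^ (m+1), ?_, ⟨1, b * a ^ m, by ring⟩, ?_⟩
  · have : (1 - b * a ^ (m+1)) * a ^ (m+1)
        = a ^ (m+1) - a ^ (m+1) * b * a ^ (m+1) := by ring
    rw [this]; exact hJ
  · rintro s' ⟨t, ht⟩ hu ⟨x, y, hxy⟩
    have h1 : s' ∣ (s' * x + a * y) ^ (m+1) - (a * y) ^ (m+1) := by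
      refine dvd_trans ⟨x, by ring⟩ (sub_dvd_pow_sub_pow _ _ _)
    rw [hxy, one_pow] at h1
    have h2 : s' ∣ (a * y) ^ (m+1) := ⟨t * y ^ (m+1), by rw [mul_pow, ht]; ring⟩
    exact hu (isUnit_of_dvd_one (by simpa using dvd_add h1 h2))
end

section
/- Every feckly zero-adequate commutative ring is feckly clean: for every x ∈ R there exists e ∈ R with x - e a unit and e - e^2 ∈ J(R). -/
open Ideal

theorem stmt2_aux (R : Type*) [CommRing R] [IsBezout R]
    (hfza : ∀ a : R, ∃ r s : R, r * s ∈ jacR R ∧ (∃ x y : R, r * x + a * y = 1) ∧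
      ∀ s' : R, s' ∣ s → ¬IsUnit s' → ¬∃ x y : R, s' * x + a * y = 1) :
    ∀ x : R, ∃ e : R, IsUnit (x - e) ∧ e - e ^ 2 ∈ jacR R := by
  intro x
  obtain ⟨r, s, hrs, ⟨u, v, huv⟩, hs⟩ := hfza x
  -- gcd (s, x-1) is a unit
  have h1 : IsUnit (IsBezout.gcd s (x - 1)) := by
    by_contra hnu
    refine hs _ (IsBezout.gcd_dvd_left s (x - 1)) hnu ?_
    obtain ⟨k, hk⟩ := IsBezout.gcd_dvd_right s (x - 1)
    exact ⟨-k, 1, by linear_combination hk⟩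
  -- gcd (r, s) is a unit
  have h2 : IsUnit (IsBezout.gcd s r) := by
    by_contra hnu
    refine hs _ (IsBezout.gcd_dvd_left s r) hnu ?_
    obtain ⟨k, hk⟩ := IsBezout.gcd_dvd_right s r
    exact ⟨k * u, v, by linear_combination huv - u * hk⟩
  have span1 : Ideal.span ({s, x - 1} : Set R) = ⊤ := by
    rw [← IsBezout.span_gcd, Ideal.span_singleton_eq_top]; exact h1
  have span2 : Ideal.span ({s, r} : Set R) = ⊤ := by
    rw [← IsBezout.span_gcd, Ideal.span_singleton_eq_top]; exact h2
  obtain ⟨p, q, hpq⟩ : ∃ p q : R, p * s + q * (x - 1) = 1 :=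
    Ideal.mem_span_pair.mp (span1 ▸ Submodule.mem_top)
  obtain ⟨d, c, hcd⟩ : ∃ d c : R, d * s + c * r = 1 :=
    Ideal.mem_span_pair.mp (span2 ▸ Submodule.mem_top)
  refine ⟨c * r, ?_, ?_⟩
  · -- x - c*r is a unit
    by_contra hnu
    obtain ⟨M, hM, hmem⟩ := exists_max_ideal_of_mem_nonunits (mem_nonunits_iff.mpr hnu)
    have hJM : r * s ∈ M := by
      have : jacR R ≤ M := sInf_le ⟨bot_le, hM⟩
      exact this hrs
    rcases (hM.isPrime.mem_or_mem hJM) with hr | hsM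
    · -- r ∈ M, so x ∈ M, contradicting r*u + x*v = 1
      have hx : x ∈ M := by
        have : x - c * r + c * r ∈ M := M.add_mem hmem (M.mul_mem_left c hr)
        simpa using this
      have : (1 : R) ∈ M := by
        have := M.add_mem (M.mul_mem_right u hr) (M.mul_mem_right v hx)
        rwa [huv] at this
      exact hM.ne_top (M.eq_top_of_isUnit_mem this isUnit_one)
    · -- s ∈ M, so x - 1 ∈ M, contradicting p*s + q*(x-1) = 1
      have hx1 : x - 1 ∈ M := by
        have h1e : (1 : R) - c * r ∈ M := by
          have heq : (1 : R) - c * r = d * s := by linear_combination -hcd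
          rw [heq]; exact M.mul_mem_left d hsM
        have : (x - c * r) - ((1:R) - c * r) ∈ M := M.sub_mem hmem h1e
        simpa using this
      have : (1 : R) ∈ M := by
        have := M.add_mem (M.mul_mem_left p hsM) (M.mul_mem_left q hx1)
        rwa [hpq] at this
      exact hM.ne_top (M.eq_top_of_isUnit_mem this isUnit_one)
  · -- c*r - (c*r)^2 ∈ J
    have heq : c * r - (c * r) ^ 2 = (c * d) * (r * s) := by
      linear_combination (-(c * r)) * hcd
    rw [heq]
    exact Ideal.mul_mem_left _ _ hrs

theorem stmt2 (R : Type*) [CommRing R] (h : FecklyZeroAdequateRing R) :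
    ∀ x : R, ∃ e : R, IsUnit (x - e) ∧ e - e ^ 2 ∈ jacR R := by
  obtain ⟨hb, hfza⟩ := h
  haveI := hb
  exact stmt2_aux R hfza
end

section
/- Let R be a feckly zero-adequate commutative ring. Then J(R) = { x ∈ R : x - u is a unit for every unit u ∈ R }. -/
open Ideal

section helpers

variable {R : Type*} [CommRing R]

lemma isUnit_one_add_of_mem_jacR {j : R} (hj : j ∈ jacR R) : IsUnit (1 + j) := by
  simpa [add_comm] using Ideal.mem_jacobson_bot.mp hj 1

lemma bez_pair (hb : IsBezout R) (a b : R) :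
    ∃ g α β : R, g ∣ a ∧ g ∣ b ∧ a * α + b * β = g := by
  haveI := hb
  obtain ⟨α, β, hαβ⟩ := IsBezout.gcd_eq_sum a b
  exact ⟨IsBezout.gcd a b, α, β, IsBezout.gcd_dvd_left a b, IsBezout.gcd_dvd_right a b,
    by rw [mul_comm a α, mul_comm b β]; exact hαβ⟩

lemma comax_of_unit_sum {r s g α β : R} (hg : IsUnit g) (hsum : r * α + s * β = g) :
    ∃ α' β' : R, r * α' + s * β' = 1 := by
  obtain ⟨gu, rfl⟩ := hg
  refine ⟨α * ↑gu⁻¹, β * ↑gu⁻¹, ?_⟩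
  calc r * (α * ↑gu⁻¹) + s * (β * ↑gu⁻¹) = (r * α + s * β) * ↑gu⁻¹ := by ring
    _ = ↑gu * ↑gu⁻¹ := by rw [hsum]
    _ = 1 := gu.mul_inv

end helpers

theorem stmt3 (R : Type*) [CommRing R] (h : FecklyZeroAdequateRing R) :
    ∀ x : R, x ∈ jacR R ↔ ∀ u : R, IsUnit u → IsUnit (x - u) := by
  intro x
  constructor
  · intro hx u hu
    obtain ⟨w, rfl⟩ := hu
    have h1 : IsUnit (x * (-(↑w⁻¹ : R)) + 1) := Ideal.mem_jacobson_bot.mp hx _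
    have key : x - ↑w = (-(↑w : R)) * (x * (-(↑w⁻¹ : R)) + 1) := by
      have hww : (↑w : R) * ↑w⁻¹ = 1 := w.mul_inv
      have h2 : (-(↑w : R)) * (x * (-(↑w⁻¹ : R)) + 1) = x * ((↑w : R) * ↑w⁻¹) - ↑w := by ring
      rw [h2, hww, mul_one]
    rw [key]
    exact (w.isUnit.neg).mul h1
  · intro hT
    rw [Ideal.mem_jacobson_bot]
    intro y
    set a : R := x * y + 1 with ha
    obtain ⟨r, s, hrsJ, ⟨p, q, hpq⟩, hdiv⟩ := h.2 a
    -- r and s are comaximal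
    have hrs_comax : ∃ α β : R, r * α + s * β = 1 := by
      obtain ⟨g, α, β, hgr, hgs, hsum⟩ := bez_pair h.1 r s
      refine comax_of_unit_sum ?_ hsum
      by_contra hgnu
      obtain ⟨r', hr'⟩ := hgr
      exact hdiv g hgs hgnu ⟨r' * p, q, by rw [← mul_assoc, ← hr', hpq]⟩
    obtain ⟨α, β, hαβ⟩ := hrs_comax
    -- s and x are comaximal
    have hsx_comax : ∃ γ δ : R, s * γ + x * δ = 1 := by
      obtain ⟨g, γ', δ', hgs, hgx, hsum⟩ := bez_pair h.1 s x
      refine comax_of_unit_sum ?_ hsum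
      by_contra hgnu
      obtain ⟨x', hx'⟩ := hgx
      refine hdiv g hgs hgnu ⟨-(x' * y), 1, ?_⟩
      rw [ha, hx']; ring
    obtain ⟨γ, δ, hγδ⟩ := hsx_comax
    set e : R := s * β with he
    set f : R := r * α with hf
    have hef : f + e = 1 := hαβ
    have hfe : f * e ∈ jacR R := by
      have h2 : f * e = (α * β) * (r * s) := by rw [he, hf]; ring
      rw [h2]; exact Ideal.mul_mem_left _ _ hrsJ
    have hxδf : x * δ * f - f ∈ jacR R := by
      have h2 : x * δ * f - f = (-(γ * α)) * (r * s) := by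
        rw [hf]; linear_combination (r * α) * hγδ
      rw [h2]; exact Ideal.mul_mem_left _ _ hrsJ
    -- u := x * f + e is a unit
    have huw : (x * f + e) * (δ * f + e) - 1 ∈ jacR R := by
      have hexp : (x * f + e) * (δ * f + e) - 1 =
          (x * δ * f - f) * f + (x + δ - 2) * (f * e) := by
        linear_combination (f + e + 1) * hef
      rw [hexp]
      exact add_mem (Ideal.mul_mem_right _ _ hxδf) (Ideal.mul_mem_left _ _ hfe)
    have hu : IsUnit (x * f + e) := by
      have h2 : IsUnit (1 + ((x * f + e) * (δ * f + e) - 1)) := isUnit_one_add_of_mem_jacR huw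
      have h3 : (1 : R) + ((x * f + e) * (δ * f + e) - 1) = (x * f + e) * (δ * f + e) := by ring
      rw [h3] at h2
      exact isUnit_of_mul_isUnit_left h2
    -- apply the hypothesis on x
    have hv : IsUnit (x - (x * f + e)) := hT _ hu
    have hveq : x - (x * f + e) = (x - 1) * e := by linear_combination (-x) * hef
    obtain ⟨vu, hvu⟩ := hv
    have hvf : (x - (x * f + e)) * f ∈ jacR R := by
      rw [hveq]
      have h2 : (x - 1) * e * f = (x - 1) * (f * e) := by ring
      rw [h2]; exact Ideal.mul_mem_left _ _ hfe
    have hfJ : f ∈ jacR R := by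
      have h5 : (↑vu⁻¹ : R) * ((↑vu : R) * f) = f := by rw [← mul_assoc, vu.inv_mul, one_mul]
      rw [hvu] at h5
      exact h5 ▸ Ideal.mul_mem_left _ _ hvf
    have heu : IsUnit e := by
      have h2 : IsUnit (1 + (-1) * f) :=
        isUnit_one_add_of_mem_jacR (Ideal.mul_mem_left _ (-1) hfJ)
      have h3 : (1 : R) + (-1) * f = e := by linear_combination (-1 : R) * hef
      rwa [h3] at h2
    -- r ∈ J
    have hrJ : r ∈ jacR R := by
      obtain ⟨eu, heu'⟩ := heu
      have her : e * r ∈ jacR R := by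
        have h2 : e * r = β * (r * s) := by rw [he]; ring
        rw [h2]; exact Ideal.mul_mem_left _ _ hrsJ
      have h5 : (↑eu⁻¹ : R) * ((↑eu : R) * r) = r := by rw [← mul_assoc, eu.inv_mul, one_mul]
      rw [heu'] at h5
      exact h5 ▸ Ideal.mul_mem_left _ _ her
    -- conclude a is a unit
    have haq : IsUnit (a * q) := by
      have h2 : IsUnit (1 + (-p) * r) :=
        isUnit_one_add_of_mem_jacR (Ideal.mul_mem_left _ (-p) hrJ)
      have h3 : (1 : R) + (-p) * r = a * q := by linear_combination -hpq
      rwa [h3] at h2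
    exact isUnit_of_mul_isUnit_left haq
end

section
/- Let R be a commutative Bézout ring. Then R is feckly zero-adequate if and only if R/J(R) is von Neumann regular. -/
open Ideal

lemma mem_jacR_iff {R : Type*} [CommRing R] {x : R} :
    x ∈ jacR R ↔ ∀ m : Ideal R, m.IsMaximal → x ∈ m := by
  simp only [jacR, Ideal.jacobson, Ideal.mem_sInf, Set.mem_setOf_eq, bot_le, true_and]

theorem stmt4 (R : Type*) [CommRing R] [IsBezout R] :
    FecklyZeroAdequateBody R ↔ VNRegular (R ⧸ jacR R) := by
  constructor
  · intro h abar
    obtain ⟨a, rfl⟩ := Ideal.Quotient.mk_surjective abar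
    obtain ⟨r, s, hrs, ⟨x, y, hxy⟩, hcond⟩ := h a
    -- Step 1: gcd r s is a unit, hence r and s are comaximal
    have hgu : IsUnit (IsBezout.gcd r s) := by
      by_contra hng
      refine hcond _ (IsBezout.gcd_dvd_right r s) hng ?_
      obtain ⟨r₁, hr₁⟩ := IsBezout.gcd_dvd_left r s
      exact ⟨r₁ * x, y, by rw [← mul_assoc, ← hr₁]; exact hxy⟩
    have hpq : ∃ p q : R, r * p + s * q = 1 := by
      have h1 : (1 : R) ∈ Ideal.span ({r, s} : Set R) := by
        rw [← IsBezout.span_gcd, Ideal.span_singleton_eq_top.2 hgu]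
        exact Submodule.mem_top
      obtain ⟨p, q, hpq⟩ := Ideal.mem_span_pair.mp h1
      exact ⟨p, q, by linear_combination hpq⟩
    obtain ⟨p, q, hpq⟩ := hpq
    -- Step 2: a * (1 - s*q) ∈ jacR R
    have key2 : a * (1 - s * q) ∈ jacR R := by
      rw [mem_jacR_iff]
      intro m hm
      by_cases ham : a ∈ m
      · exact Ideal.mul_mem_right _ _ ham
      · have hsm : s ∉ m := by
          intro hsm
          set d := IsBezout.gcd s a with hd
          have hdm : d ∉ m := by
            intro hdm
            obtain ⟨a₁, ha₁⟩ := IsBezout.gcd_dvd_right s a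
            exact ham (ha₁ ▸ Ideal.mul_mem_right _ _ hdm)
          obtain ⟨w, c, hcm, hwc⟩ := hm.exists_inv hdm
          set t := IsBezout.gcd s c with ht
          have hts : t ∣ s := IsBezout.gcd_dvd_left s c
          have htc : t ∣ c := IsBezout.gcd_dvd_right s c
          have htm : t ∈ m := by
            obtain ⟨α, β, hαβ⟩ := IsBezout.gcd_eq_sum s c
            show IsBezout.gcd s c ∈ m
            rw [← hαβ]
            exact Ideal.add_mem _ (Ideal.mul_mem_left _ _ hsm) (Ideal.mul_mem_left _ _ hcm)
          have htnu : ¬IsUnit t := fun hu => hm.ne_top (Ideal.eq_top_of_isUnit_mem _ htm hu)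
          refine hcond t hts htnu ?_
          obtain ⟨U, V, hUV⟩ := IsBezout.gcd_eq_sum s a
          obtain ⟨s₂, hs₂⟩ := hts
          obtain ⟨c₂, hc₂⟩ := htc
          refine ⟨w * U * s₂ + c₂, w * V, ?_⟩
          have : w * d + c = 1 := hwc
          calc t * (w * U * s₂ + c₂) + a * (w * V)
              = w * (U * (t * s₂) + V * a) + t * c₂ := by ring
            _ = w * d + c := by rw [← hs₂, hUV, ← hc₂]
            _ = 1 := hwc
        have hrm : r ∈ m := by
          have hrsm : r * s ∈ m := mem_jacR_iff.mp hrs m hm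
          rcases hm.isPrime.mem_or_mem hrsm with h' | h'
          · exact h'
          · exact absurd h' hsm
        have : a * (1 - s * q) = (a * p) * r := by linear_combination (-a) * hpq
        rw [this]
        exact Ideal.mul_mem_left _ _ hrm
    -- Step 3: s * (1 - a*y) ∈ jacR R
    have key3 : s * (1 - a * y) ∈ jacR R := by
      have : s * (1 - a * y) = x * (r * s) := by linear_combination (-s) * hxy
      rw [this]
      exact Ideal.mul_mem_left _ _ hrs
    -- Step 4: conclude in the quotient
    set Q := Ideal.Quotient.mk (jacR R) with hQ
    have e1 : Q a = Q a * Q s * Q q := by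
      rw [← _root_.map_mul, ← _root_.map_mul]
      refine (Ideal.Quotient.mk_eq_mk_iff_sub_mem a (a * s * q)).mpr ?_
      have : a - a * s * q = a * (1 - s * q) := by ring
      rw [this]; exact key2
    have e2 : Q s = Q s * Q a * Q y := by
      rw [← _root_.map_mul, ← _root_.map_mul]
      refine (Ideal.Quotient.mk_eq_mk_iff_sub_mem s (s * a * y)).mpr ?_
      have : s - s * a * y = s * (1 - a * y) := by ring
      rw [this]; exact key3
    refine ⟨Q y, ?_⟩
    calc Q a = Q a * Q s * Q q := e1
      _ = Q a * (Q s * Q a * Q y) * Q q := by rw [← e2]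
      _ = (Q a * Q s * Q q) * (Q a * Q y) := by ring
      _ = Q a * (Q a * Q y) := by rw [← e1]
      _ = Q a * Q y * Q a := by ring
  · intro hv a
    obtain ⟨b0, hb⟩ := hv (Ideal.Quotient.mk (jacR R) a)
    obtain ⟨b, rfl⟩ := Ideal.Quotient.mk_surjective b0
    refine ⟨1 - a * b, a, ?_, ⟨1, b, by ring⟩, ?_⟩
    · have h1 : Ideal.Quotient.mk (jacR R) a = Ideal.Quotient.mk (jacR R) (a * b * a) := by
        rw [_root_.map_mul, _root_.map_mul]; exact hb
      have h2 : a - a * b * a ∈ jacR R := (Ideal.Quotient.mk_eq_mk_iff_sub_mem a (a * b * a)).mp h1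
      have : (1 - a * b) * a = a - a * b * a := by ring
      rw [this]
      exact h2
    · rintro s' hdvd hnu ⟨x, y, hxy⟩
      obtain ⟨c, hc⟩ := hdvd
      refine hnu (IsUnit.of_mul_eq_one (a := s') (x + c * y) ?_)
      calc s' * (x + c * y) = s' * x + (s' * c) * y := by ring
        _ = s' * x + a * y := by rw [← hc]
        _ = 1 := hxy
end

section
/- Let R be a commutative Bézout ring. Then R/J(R) is von Neumann regular if and only if R/J(R) is π-regular. -/
open Ideal

theorem jac_quot_bot' (R : Type*) [CommRing R] : jacR (R ⧸ jacR R) = ⊥ :=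
  (Ideal.jacobson_eq_iff_jacobson_quotient_eq_bot).mp Ideal.jacobson_idem

theorem key_aux' {S : Type*} [CommRing S] (h : jacR S = ⊥) (a : S) (n : ℕ) (hn : 1 ≤ n)
    (b : S) (hab : a ^ n = a ^ n * b * a ^ n) : ∃ c, a = a * c * a := by
  have he : (a * (1 - a ^ n * b)) ^ n = 0 := by
    rw [mul_pow, ← pow_one (1 - a ^ n * b), ← pow_mul, one_mul]
    calc a ^ n * (1 - a ^ n * b) ^ n = a ^ n * (1 - a ^ n * b) * (1 - a ^ n * b) ^ (n - 1) := by
          rw [mul_assoc, ← pow_succ']; congr 2; omega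
      _ = 0 := by
          have h0 : a ^ n * (1 - a ^ n * b) = 0 := by
            calc a ^ n * (1 - a ^ n * b) = a ^ n - a ^ n * b * a ^ n := by ring
              _ = 0 := by rw [← hab, sub_self]
          rw [h0, zero_mul]
  have hmem : a * (1 - a ^ n * b) ∈ jacR S :=
    Ideal.radical_le_jacobson (Ideal.mem_radical_of_pow_mem (m := n)
      (by rw [he]; exact zero_mem _))
  rw [h, Ideal.mem_bot] at hmem
  have hae : a = a * (a ^ n * b) := by linear_combination hmem
  obtain ⟨m, rfl⟩ : ∃ m, n = m + 1 := ⟨n - 1, by omega⟩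
  refine ⟨a ^ m * b, ?_⟩
  calc a = a * (a ^ (m + 1) * b) := hae
    _ = a * (a ^ m * b) * a := by ring

theorem stmt5 (R : Type*) [CommRing R] [IsBezout R] :
    VNRegular (R ⧸ jacR R) ↔ PiRegular (R ⧸ jacR R) := by
  constructor
  · intro hv a
    obtain ⟨b, hb⟩ := hv a
    exact ⟨1, le_refl 1, b, by simpa using hb⟩
  · intro hp a
    obtain ⟨n, hn, b, hb⟩ := hp a
    exact key_aux' (jac_quot_bot' R) a n hn b hb
end

section
/- A commutative ring R is feckly zero-adequate if and only if R is a Bézout ring and R/J(R) is zero-adequate (i.e., 0 is adequate in R/J(R)). -/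
open Ideal

lemma unit_one_add' {R : Type*} [CommRing R] {j : R} (hj : j ∈ jacR R) : IsUnit (1 + j) := by
  simpa [add_comm] using Ideal.mem_jacobson_bot.mp hj 1

lemma comax_lift' {R : Type*} [CommRing R] {r a x y : R}
    (h : r * x + a * y - 1 ∈ jacR R) : ∃ x y : R, r * x + a * y = 1 := by
  obtain ⟨w, hw⟩ := (by simpa using unit_one_add' h : IsUnit (r * x + a * y)).exists_right_inv
  exact ⟨x * w, y * w, by linear_combination hw⟩

lemma bezout_pair' {R : Type*} [CommRing R] (hB : IsBezout R) (s c : R) :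
    ∃ d p q : R, d ∣ s ∧ d ∣ c ∧ p * s + q * c = d := by
  haveI := hB
  obtain ⟨d, hd⟩ := IsBezout.isPrincipal_of_FG (Ideal.span {s, c})
    (Submodule.fg_span (Set.toFinite _))
  have hd' : Ideal.span {s, c} = Ideal.span {d} := hd
  have hs : s ∈ Ideal.span {d} := hd' ▸ Ideal.subset_span (by simp)
  have hc : c ∈ Ideal.span {d} := hd' ▸ Ideal.subset_span (by simp)
  have hdm : d ∈ Ideal.span ({s, c} : Set R) := hd' ▸ Ideal.subset_span (by simp)
  obtain ⟨p, q, hpq⟩ := Ideal.mem_span_pair.mp hdm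
  exact ⟨d, p, q, Ideal.mem_span_singleton.mp hs, Ideal.mem_span_singleton.mp hc, hpq⟩

lemma isUnit_of_mk_isUnit {R : Type*} [CommRing R] {s : R}
    (h : IsUnit (Ideal.Quotient.mk (jacR R) s)) : IsUnit s := by
  obtain ⟨u, hu⟩ := h.exists_right_inv
  obtain ⟨v, rfl⟩ := Ideal.Quotient.mk_surjective u
  have : s * v - 1 ∈ jacR R := by
    rw [← Ideal.Quotient.eq_zero_iff_mem]
    simp [hu]
  have h2 : IsUnit (s * v) := by simpa using unit_one_add' this
  exact isUnit_of_mul_isUnit_left h2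

theorem stmt6 (R : Type*) [CommRing R] :
    FecklyZeroAdequateRing R ↔ IsBezout R ∧ Adequate (0 : R ⧸ jacR R) := by
  set π := Ideal.Quotient.mk (jacR R) with hπ
  constructor
  · rintro ⟨hB, hF⟩
    refine ⟨hB, ?_⟩
    intro ab
    obtain ⟨a, rfl⟩ := Ideal.Quotient.mk_surjective ab
    obtain ⟨r, s, hrs, ⟨x, y, hxy⟩, hdiv⟩ := hF a
    refine ⟨π r, π s, ?_, ⟨π x, π y, ?_⟩, ?_⟩
    · rw [← _root_.map_mul]
      exact (Ideal.Quotient.eq_zero_iff_mem.mpr hrs).symm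
    · rw [← _root_.map_mul, ← _root_.map_mul, ← map_add, hxy, map_one]
    · rintro t ⟨u, hu⟩ htunit ⟨xb, yb, h1⟩
      obtain ⟨c, rfl⟩ := Ideal.Quotient.mk_surjective t
      obtain ⟨u₀, rfl⟩ := Ideal.Quotient.mk_surjective u
      obtain ⟨xb, rfl⟩ := Ideal.Quotient.mk_surjective xb
      obtain ⟨yb, rfl⟩ := Ideal.Quotient.mk_surjective yb
      obtain ⟨d, p, q, hds, ⟨e, hdc⟩, hpq⟩ := bezout_pair' hB s c
      -- π c ∣ π d
      have hcd : π c ∣ π d := by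
        refine ⟨π p * π u₀ + π q, ?_⟩
        have := congrArg π hpq
        rw [map_add, _root_.map_mul, _root_.map_mul, hu] at this
        rw [← this]; ring
      -- d is comaximal with a in R
      have hda : ∃ x y : R, d * x + a * y = 1 := by
        apply comax_lift' (x := e * xb) (y := yb)
        rw [← Ideal.Quotient.eq_zero_iff_mem]
        have : π (d * (e * xb) + a * yb) = π c * π xb + π a * π yb := by
          rw [hdc]
          simp only [map_add, _root_.map_mul]
          ring
        rw [hπ] at this
        simp only [map_sub, this, h1, map_one, sub_self]
      -- hence d is a unit
      have hdu : IsUnit d := by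
        by_contra hnd
        exact hdiv d hds hnd hda
      exact htunit (isUnit_of_dvd_unit hcd (hdu.map π))
  · rintro ⟨hB, hA⟩
    refine ⟨hB, ?_⟩
    intro a
    obtain ⟨rb, sb, h0, ⟨xb, yb, hxy⟩, hdiv⟩ := hA (π a)
    obtain ⟨r, rfl⟩ := Ideal.Quotient.mk_surjective rb
    obtain ⟨s, rfl⟩ := Ideal.Quotient.mk_surjective sb
    obtain ⟨x, rfl⟩ := Ideal.Quotient.mk_surjective xb
    obtain ⟨y, rfl⟩ := Ideal.Quotient.mk_surjective yb
    refine ⟨r, s, ?_, ?_, ?_⟩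
    · rw [← Ideal.Quotient.eq_zero_iff_mem]
      rw [_root_.map_mul]; exact h0.symm
    · apply comax_lift' (x := x) (y := y)
      rw [← Ideal.Quotient.eq_zero_iff_mem]
      rw [hπ] at hxy
      simp only [map_sub, map_add, _root_.map_mul, map_one, hxy, sub_self]
    · rintro s' hd hnu ⟨x', y', h1⟩
      have h2 : π s' ∣ π s := map_dvd _ hd
      have h3 : ¬IsUnit (π s') := fun h => hnu (isUnit_of_mk_isUnit h)
      exact hdiv (π s') h2 h3 ⟨π x', π y', by
        rw [← _root_.map_mul, ← _root_.map_mul, ← map_add, h1, map_one]⟩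
end

section
/- Every finite commutative Bézout ring is feckly zero-adequate. -/
open Ideal

lemma exists_pow_idem {R : Type*} [CommRing R] [Finite R] (a : R) :
    ∃ n : ℕ, 1 ≤ n ∧ a ^ n * a ^ n = a ^ n := by
  obtain ⟨i, j, hne, hij⟩ := Finite.exists_ne_map_eq_of_infinite (fun n : ℕ => a ^ n)
  wlog hlt : i < j generalizing i j
  · exact this j i hne.symm hij.symm (by omega)
  set k := j - i with hk
  have hk1 : 1 ≤ k := by omega
  have hstep : ∀ m, i ≤ m → a ^ (m + k) = a ^ m := by
    intro m hm
    calc a ^ (m + k) = a ^ (m - i) * a ^ j := by rw [← pow_add]; congr 1; omega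
      _ = a ^ (m - i) * a ^ i := by rw [hij]
      _ = a ^ m := by rw [← pow_add]; congr 1; omega
  have hiter : ∀ t m, i ≤ m → a ^ (m + t * k) = a ^ m := by
    intro t
    induction t with
    | zero => simp
    | succ t ih =>
      intro m hm
      have : m + (t + 1) * k = (m + k) + t * k := by ring
      rw [this, ih (m + k) (by omega), hstep m hm]
  refine ⟨(i + 1) * k, by nlinarith, ?_⟩
  rw [← pow_add]
  have : (i + 1) * k + (i + 1) * k = (i + 1) * k + (i + 1) * k := rfl
  exact hiter (i + 1) ((i + 1) * k) (by nlinarith)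

theorem stmt9 (R : Type*) [CommRing R] [Finite R] [IsBezout R] :
    FecklyZeroAdequateRing R := by
  refine ⟨inferInstance, fun a => ?_⟩
  obtain ⟨n, hn, hidem⟩ := exists_pow_idem a
  refine ⟨1 - a ^ n, a ^ n, ?_, ⟨1, a ^ (n - 1), ?_⟩, ?_⟩
  · have h0 : (1 - a ^ n) * a ^ n = 0 := by
      rw [sub_mul, one_mul, hidem, sub_self]
    rw [h0]; exact zero_mem _
  · have : a * a ^ (n - 1) = a ^ n := by
      rw [← pow_succ']
      congr 1
      omega
    rw [this]; ring
  · rintro s' hdvd hunit ⟨x, y, hxy⟩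
    apply hunit
    apply isUnit_of_dvd_one
    have h1 : s' ∣ (s' * x + a * y) ^ n - (a * y) ^ n :=
      dvd_trans ⟨x, by ring⟩ (sub_dvd_pow_sub_pow _ _ n)
    have h2 : s' ∣ (a * y) ^ n := by
      rw [mul_pow]; exact dvd_mul_of_dvd_left hdvd _
    have := dvd_add h1 h2
    rwa [sub_add_cancel, hxy, one_pow] at this
end

section
/- Let R = { m/n ∈ ℚ : m, n ∈ ℤ, n ≠ 0, 3 ∤ n and 5 ∤ n } (the localization of ℤ away from 3 and 5). Then R is feckly zero-adequate but not zero-adequate. -/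
open Ideal

/-- The multiplicative set of integers not divisible by 3 or 5. -/
def S35 : Submonoid ℤ where
  carrier := {n : ℤ | ¬(3 ∣ n) ∧ ¬(5 ∣ n)}
  one_mem' := by constructor <;> decide
  mul_mem' := by
    rintro a b ⟨h3a, h5a⟩ ⟨h3b, h5b⟩
    refine ⟨fun h => ?_, fun h => ?_⟩
    · rcases Int.prime_three.dvd_mul.mp h with h | h
      · exact h3a h
      · exact h3b h
    · have h5 : Prime (5 : ℤ) := by norm_num
      rcases h5.dvd_mul.mp h with h | h
      · exact h5a h
      · exact h5b h

noncomputable abbrev RR := Localization S35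
noncomputable abbrev CC : ℤ →+* RR := algebraMap ℤ RR

lemma CC_eq (m : ℤ) : CC m = Localization.mk m 1 := by
  rw [Localization.mk_one_eq_algebraMap]

lemma hS0 : S35 ≤ nonZeroDivisors ℤ := by
  intro x hx
  rw [mem_nonZeroDivisors_iff_ne_zero]
  rintro rfl
  exact hx.1 ⟨0, by ring⟩

noncomputable instance : IsDomain RR := IsLocalization.isDomain_localization hS0

lemma mk_cancel (k : ℤ) (n : S35) : Localization.mk (k * (n : ℤ)) n = Localization.mk k 1 := by
  rw [Localization.mk_eq_mk_iff, Localization.r_iff_exists]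
  exact ⟨1, by push_cast; ring⟩

lemma mk_surj (x : RR) : ∃ (m : ℤ) (n : S35), x = Localization.mk m n :=
  Localization.induction_on x fun y => ⟨y.1, y.2, rfl⟩

lemma unit_mk (m : ℤ) (hm : m ∈ S35) (n : S35) : IsUnit (Localization.mk m n) := by
  refine isUnit_iff_exists_inv.mpr ⟨Localization.mk (n : ℤ) ⟨m, hm⟩, ?_⟩
  rw [Localization.mk_mul, ← Localization.mk_one, Localization.mk_eq_mk_iff,
    Localization.r_iff_exists]
  exact ⟨1, by push_cast; ring⟩

lemma mem_span_mk (p : ℤ) (hp : Prime p) (hpS : ∀ n : S35, ¬ p ∣ (n : ℤ)) (m : ℤ) (n : S35) :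
    Localization.mk m n ∈ Ideal.span {CC p} ↔ p ∣ m := by
  constructor
  · intro h
    obtain ⟨z, hz⟩ := Ideal.mem_span_singleton'.mp h
    obtain ⟨k, d, rfl⟩ := mk_surj z
    rw [CC_eq, Localization.mk_mul, mul_one, Localization.mk_eq_mk_iff,
      Localization.r_iff_exists] at hz
    obtain ⟨c, hc⟩ := hz
    dsimp only at hc
    have hdvd : p ∣ (c : ℤ) * ((n : ℤ) * (k * p)) := ⟨(c : ℤ) * ((n : ℤ) * k), by ring⟩
    rw [hc] at hdvd
    rcases hp.dvd_mul.mp hdvd with h1 | h1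
    · exact absurd h1 (hpS c)
    rcases hp.dvd_mul.mp h1 with h2 | h2
    · exact absurd h2 (hpS d)
    · exact h2
  · rintro ⟨k, rfl⟩
    refine Ideal.mem_span_singleton'.mpr ⟨Localization.mk k n, ?_⟩
    rw [CC_eq, Localization.mk_mul, mul_comm, mul_one]

lemma hpS3 : ∀ n : S35, ¬ (3:ℤ) ∣ (n : ℤ) := fun n => n.2.1
lemma hpS5 : ∀ n : S35, ¬ (5:ℤ) ∣ (n : ℤ) := fun n => n.2.2
lemma p5 : Prime (5 : ℤ) := by norm_num

lemma one_mk : (1 : RR) = Localization.mk 1 1 := (Localization.mk_one).symm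

lemma not_mem3 : (1 : RR) ∉ Ideal.span {CC 3} := by
  rw [one_mk, mem_span_mk 3 Int.prime_three hpS3]; decide

lemma not_mem5 : (1 : RR) ∉ Ideal.span {CC 5} := by
  rw [one_mk, mem_span_mk 5 p5 hpS5]; decide

lemma notunit (p : ℤ) (hp : Prime p) (hpS : ∀ n : S35, ¬ p ∣ (n : ℤ)) (hp1 : ¬ p ∣ 1) :
    ¬ IsUnit (CC p) := by
  intro h
  obtain ⟨v, hv⟩ := isUnit_iff_exists_inv.mp h
  have : (1 : RR) ∈ Ideal.span {CC p} := Ideal.mem_span_singleton'.mpr ⟨v, by rw [mul_comm]; exact hv⟩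
  rw [one_mk, mem_span_mk p hp hpS] at this
  exact hp1 this

lemma jac15 : CC 15 ∈ jacR RR := by
  rw [jacR, Ideal.mem_jacobson_bot]
  intro y
  obtain ⟨m, n, rfl⟩ := mk_surj y
  have : CC 15 * Localization.mk m n + 1 = Localization.mk ((n : ℤ) + 1 * (15 * m)) (n * 1) := by
    rw [CC_eq, Localization.mk_mul, one_mul, one_mk, Localization.add_mk]
    norm_num
  rw [this]
  refine unit_mk _ ⟨fun h => ?_, fun h => ?_⟩ _
  · exact n.2.1 (by omega)
  · exact n.2.2 (by omega)

lemma bez : IsBezout RR := by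
  rw [IsBezout.iff_span_pair_isPrincipal]
  intro x y
  obtain ⟨m, n, rfl⟩ := mk_surj x
  obtain ⟨p, q, rfl⟩ := mk_surj y
  refine ⟨⟨CC (Int.gcd m p), le_antisymm ?_ ?_⟩⟩
  · rw [Ideal.span_le]
    rintro z hz
    simp only [Set.mem_insert_iff, Set.mem_singleton_iff] at hz
    rcases hz with rfl | rfl
    · obtain ⟨m', hm'⟩ := (Int.gcd_dvd_left m p : (Int.gcd m p : ℤ) ∣ m)
      exact Ideal.mem_span_singleton.mpr ⟨Localization.mk m' n, by
        rw [CC_eq, Localization.mk_mul, one_mul, ← hm']⟩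
    · obtain ⟨p', hp'⟩ := (Int.gcd_dvd_right m p : (Int.gcd m p : ℤ) ∣ p)
      exact Ideal.mem_span_singleton.mpr ⟨Localization.mk p' q, by
        rw [CC_eq, Localization.mk_mul, one_mul, ← hp']⟩
  · refine Submodule.span_le.mpr (Set.singleton_subset_iff.mpr ?_)
    refine Ideal.mem_span_pair.mpr ⟨Localization.mk (Int.gcdA m p * (n : ℤ)) 1,
      Localization.mk (Int.gcdB m p * (q : ℤ)) 1, ?_⟩
    rw [Localization.mk_mul, Localization.mk_mul, one_mul, one_mul,
      show Int.gcdA m p * (n : ℤ) * m = (Int.gcdA m p * m) * (n : ℤ) by ring,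
      show Int.gcdB m p * (q : ℤ) * p = (Int.gcdB m p * p) * (q : ℤ) by ring,
      mk_cancel, mk_cancel, ← CC_eq, ← CC_eq, ← _root_.map_add CC]
    exact congrArg CC (by rw [Int.gcd_eq_gcd_ab]; ring)

lemma no_comax (I : Ideal RR) (hI1 : (1 : RR) ∉ I) {a s' x y : RR} (hs' : s' ∈ I) (ha : a ∈ I)
    (hxy : s' * x + a * y = 1) : False :=
  hI1 (hxy ▸ I.add_mem (I.mul_mem_right x hs') (I.mul_mem_right y ha))

lemma tri (z : RR) (h : ¬ IsUnit z) :
    z ∈ Ideal.span {CC 3} ∨ z ∈ Ideal.span {CC 5} := by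
  obtain ⟨m, n, rfl⟩ := mk_surj z
  by_cases h3 : (3 : ℤ) ∣ m
  · exact Or.inl ((mem_span_mk 3 Int.prime_three hpS3 m n).mpr h3)
  by_cases h5 : (5 : ℤ) ∣ m
  · exact Or.inr ((mem_span_mk 5 p5 hpS5 m n).mpr h5)
  · exact absurd (unit_mk m ⟨h3, h5⟩ n) h

lemma CC3_not_mem5 : CC 3 ∉ Ideal.span {CC 5} := by
  rw [CC_eq 3, mem_span_mk 5 p5 hpS5]; omega

lemma CC5_not_mem3 : CC 5 ∉ Ideal.span {CC 3} := by
  rw [CC_eq 5, mem_span_mk 3 Int.prime_three hpS3]; omega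

lemma one_not_mem3 : (1 : RR) ∉ Ideal.span {CC 3} := by
  rw [one_mk, mem_span_mk 3 Int.prime_three hpS3]; omega

lemma one_not_mem5 : (1 : RR) ∉ Ideal.span {CC 5} := by
  rw [one_mk, mem_span_mk 5 p5 hpS5]; omega

-- divisor of CC p that is a nonunit lies in span {CC p}
lemma divisor_mem3 (s' : RR) (hd : s' ∣ CC 3) (hnu : ¬ IsUnit s') :
    s' ∈ Ideal.span {CC 3} := by
  rcases tri s' hnu with h | h
  · exact h
  · obtain ⟨t, ht⟩ := hd
    exact absurd (ht ▸ Ideal.mul_mem_right t _ h) CC3_not_mem5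

lemma divisor_mem5 (s' : RR) (hd : s' ∣ CC 5) (hnu : ¬ IsUnit s') :
    s' ∈ Ideal.span {CC 5} := by
  rcases tri s' hnu with h | h
  · obtain ⟨t, ht⟩ := hd
    exact absurd (ht ▸ Ideal.mul_mem_right t _ h) CC5_not_mem3
  · exact h

lemma comax_of_not_dvd (p m : ℤ) (hp : Prime p) (hpm : ¬ p ∣ m) (n : S35) :
    ∃ x y : RR, CC p * x + Localization.mk m n * y = 1 := by
  obtain ⟨x0, y0, hco⟩ := (hp.coprime_iff_not_dvd).mpr hpm
  refine ⟨CC x0, Localization.mk (y0 * (n : ℤ)) 1, ?_⟩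
  rw [← _root_.map_mul CC, Localization.mk_mul, mul_one,
    show m * (y0 * (n : ℤ)) = (m * y0) * (n : ℤ) by ring, mk_cancel, ← CC_eq,
    ← _root_.map_add CC, show p * x0 + m * y0 = 1 by linarith [hco], _root_.map_one CC]

theorem stmt10 :
    FecklyZeroAdequateRing (Localization S35) ∧
      ¬ZeroAdequateBody (Localization S35) := by
  constructor
  · refine ⟨bez, ?_⟩
    intro a
    obtain ⟨m, n, rfl⟩ := mk_surj a
    by_cases h3 : (3 : ℤ) ∣ m
    · by_cases h5 : (5 : ℤ) ∣ m
      · refine ⟨1, CC 15, by rw [one_mul]; exact jac15, ⟨1, 0, by ring⟩, ?_⟩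
        rintro s' hd hnu ⟨x, y, hxy⟩
        rcases tri s' hnu with h | h
        · exact no_comax _ one_not_mem3 h ((mem_span_mk 3 Int.prime_three hpS3 m n).mpr h3) hxy
        · exact no_comax _ one_not_mem5 h ((mem_span_mk 5 p5 hpS5 m n).mpr h5) hxy
      · refine ⟨CC 5, CC 3, ?_, comax_of_not_dvd 5 m p5 h5 n, ?_⟩
        · rw [← _root_.map_mul CC, show (5 * 3 : ℤ) = 15 by norm_num]; exact jac15
        · rintro s' hd hnu ⟨x, y, hxy⟩
          exact no_comax _ one_not_mem3 (divisor_mem3 s' hd hnu)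
            ((mem_span_mk 3 Int.prime_three hpS3 m n).mpr h3) hxy
    · by_cases h5 : (5 : ℤ) ∣ m
      · refine ⟨CC 3, CC 5, ?_, comax_of_not_dvd 3 m Int.prime_three h3 n, ?_⟩
        · rw [← _root_.map_mul CC, show (3 * 5 : ℤ) = 15 by norm_num]; exact jac15
        · rintro s' hd hnu ⟨x, y, hxy⟩
          exact no_comax _ one_not_mem5 (divisor_mem5 s' hd hnu)
            ((mem_span_mk 5 p5 hpS5 m n).mpr h5) hxy
      · obtain ⟨v, hv⟩ := isUnit_iff_exists_inv.mp (unit_mk m ⟨h3, h5⟩ n)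
        refine ⟨CC 15, 1, by rw [mul_one]; exact jac15,
          ⟨0, v, by rw [mul_zero, zero_add]; exact hv⟩, ?_⟩
        rintro s' hd hnu -
        exact hnu (isUnit_of_dvd_one hd)
  · intro h
    obtain ⟨r, s, hrs, ⟨x, y, hxy⟩, hs⟩ := h (CC 3)
    rcases mul_eq_zero.mp hrs with rfl | rfl
    · rw [zero_mul, zero_add] at hxy
      exact notunit 3 Int.prime_three hpS3 (by omega) (isUnit_iff_exists_inv.mpr ⟨y, hxy⟩)
    · exact hs (CC 5) (dvd_zero _) (notunit 5 p5 hpS5 (by omega))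
        ⟨CC 2, CC (-3), by
          rw [← _root_.map_mul CC, ← _root_.map_mul CC, ← _root_.map_add CC,
            show (5 * 2 + 3 * (-3) : ℤ) = 1 by norm_num, _root_.map_one CC]⟩
end

section
/- Every homomorphic image of a feckly zero-adequate commutative ring is feckly zero-adequate: if R is feckly zero-adequate and I is an ideal of R, then R/I is feckly zero-adequate. -/
open Ideal

lemma jac_map_quot {R : Type*} [CommRing R] (I : Ideal R) {j : R} (hj : j ∈ jacR R) :
    Ideal.Quotient.mk I j ∈ jacR (R ⧸ I) := by
  rw [Ideal.mem_jacobson_bot] at hj ⊢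
  intro y
  obtain ⟨y, rfl⟩ := Ideal.Quotient.mk_surjective y
  have := (hj y).map (Ideal.Quotient.mk I)
  simpa using this

lemma key_reg {R : Type*} [CommRing R] (hB : IsBezout R) (hbody : FecklyZeroAdequateBody R)
    (a : R) : ∃ b : R, a - a * b * a ∈ jacR R := by
  obtain ⟨r, s, hrs, ⟨x, y, hxy⟩, hdiv⟩ := hbody a
  refine ⟨y, ?_⟩
  have har : a * r ∈ jacR R := by
    have hj : jacR R = sInf {J : Ideal R | ⊥ ≤ J ∧ J.IsMaximal} := rfl
    rw [hj, Ideal.mem_sInf]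
    rintro M ⟨-, hM⟩
    by_cases ha : a ∈ M
    · exact M.mul_mem_right _ ha
    · have hs : s ∉ M := by
        intro hs
        obtain ⟨k, m, hm, hkm⟩ := hM.exists_inv ha
        obtain ⟨d, hd⟩ := hB.isPrincipal_of_FG (Ideal.span {s, m})
          (Submodule.fg_span (Set.toFinite _))
        rw [show Submodule.span R ({d} : Set R) = Ideal.span {d} from rfl] at hd
        have hds : d ∣ s := by
          have : s ∈ Ideal.span {s, m} := Ideal.subset_span (by simp)
          rw [hd] at this
          exact (Ideal.mem_span_singleton).1 this
        have hdM : d ∈ M := by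
          have : d ∈ Ideal.span ({s, m} : Set R) := by
            rw [hd]; exact Ideal.subset_span rfl
          refine Ideal.span_le.2 ?_ this
          rintro z (rfl | rfl) <;> simp_all
        have hdu : ¬IsUnit d := fun hu => hM.ne_top (M.eq_top_of_isUnit_mem hdM hu)
        refine hdiv d hds hdu ?_
        have hm' : m ∈ Ideal.span ({d} : Set R) := by
          rw [← hd]; exact Ideal.subset_span (by simp)
        obtain ⟨w, rfl⟩ := (Ideal.mem_span_singleton).1 hm'
        exact ⟨w, k, by linear_combination hkm⟩
      have hrsM : r * s ∈ M := (hj ▸ sInf_le (show M ∈ _ from ⟨bot_le, hM⟩) : jacR R ≤ M) hrs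
      have hr : r ∈ M := ((hM.isPrime.mem_or_mem hrsM).resolve_right hs)
      exact M.mul_mem_left _ hr
  have : a - a * y * a = (a * r) * x := by linear_combination (-a) * hxy
  rw [this]
  exact Ideal.mul_mem_right _ _ har

lemma body_of_reg {S : Type*} [CommRing S]
    (h : ∀ a : S, ∃ b : S, a - a * b * a ∈ jacR S) : FecklyZeroAdequateBody S := by
  intro a
  obtain ⟨b, hb⟩ := h a
  have hb' : (1 - a * b) * a ∈ jacR S := by
    have e : (1 - a * b) * a = a - a * b * a := by ring
    rw [e]; exact hb
  refine ⟨1 - a * b, a, hb', ⟨1, b, by ring⟩, ?_⟩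
  rintro s' ⟨t, rfl⟩ hs' ⟨x, y, hxy⟩
  exact hs' (IsUnit.of_mul_eq_one (a := s') (x + t * y) (by linear_combination hxy))

theorem stmt11 (R : Type*) [CommRing R] (h : FecklyZeroAdequateRing R)
    (I : Ideal R) : FecklyZeroAdequateRing (R ⧸ I) := by
  obtain ⟨hB, hbody⟩ := h
  haveI := hB
  refine ⟨Function.Surjective.isBezout _ Ideal.Quotient.mk_surjective, ?_⟩
  refine body_of_reg fun a => ?_
  obtain ⟨a, rfl⟩ := Ideal.Quotient.mk_surjective a
  obtain ⟨b, hb⟩ := key_reg hB hbody a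
  refine ⟨Ideal.Quotient.mk I b, ?_⟩
  have := jac_map_quot I hb
  rwa [map_sub, _root_.map_mul, _root_.map_mul] at this
end

section
/- Let R = ∏_{i∈I} R_i be a product of commutative rings. Then R is feckly zero-adequate if and only if each R_i is feckly zero-adequate. -/
open Ideal

section AuxPi

variable {ι' : Type*} {S : ι' → Type*} [∀ i, CommRing (S i)]

lemma pi_isUnit_iff (f : ∀ i, S i) : IsUnit f ↔ ∀ i, IsUnit (f i) := by
  constructor
  · rintro ⟨u, rfl⟩ i
    exact isUnit_iff_exists_inv.2 ⟨(↑u⁻¹ : ∀ i, S i) i, congrFun u.mul_inv i⟩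
  · intro h
    choose g hg using fun i => isUnit_iff_exists_inv.1 (h i)
    exact isUnit_iff_exists_inv.2 ⟨g, funext hg⟩

lemma pi_mem_jac_iff (x : ∀ i, S i) :
    x ∈ jacR (∀ i, S i) ↔ ∀ i, x i ∈ jacR (S i) := by
  classical
  simp only [jacR, Ideal.mem_jacobson_bot]
  constructor
  · intro h i y
    have := (pi_isUnit_iff _).1 (h (Function.update (0 : ∀ i, S i) i y)) i
    simpa using this
  · intro h y
    rw [pi_isUnit_iff]
    intro i
    exact h i (y i)

lemma pi_isBezout_iff :
    IsBezout (∀ i, S i) ↔ ∀ i, IsBezout (S i) := by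
  classical
  simp only [IsBezout.iff_span_pair_isPrincipal]
  constructor
  · intro H i x y
    obtain ⟨g, hg⟩ := (H (Function.update (0 : ∀ i, S i) i x)
      (Function.update (0 : ∀ i, S i) i y)).principal
    rw [Ideal.submodule_span_eq] at hg
    refine ⟨⟨g i, ?_⟩⟩
    rw [Ideal.submodule_span_eq]
    refine le_antisymm ?_ ?_
    · rw [Ideal.span_le]
      rintro z (rfl | rfl)
      · have : Function.update (0 : ∀ i, S i) i z ∈ Ideal.span {g} := by
          rw [← hg]; exact Ideal.subset_span (by left; rfl)
        obtain ⟨c, hc⟩ := Ideal.mem_span_singleton'.1 this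
        rw [SetLike.mem_coe, Ideal.mem_span_singleton']
        exact ⟨c i, by simpa using congrFun hc i⟩
      · have : Function.update (0 : ∀ i, S i) i z ∈ Ideal.span {g} := by
          rw [← hg]; exact Ideal.subset_span (by right; rfl)
        obtain ⟨c, hc⟩ := Ideal.mem_span_singleton'.1 this
        rw [SetLike.mem_coe, Ideal.mem_span_singleton']
        exact ⟨c i, by simpa using congrFun hc i⟩
    · rw [Ideal.span_le, Set.singleton_subset_iff]
      have : g ∈ Ideal.span {Function.update (0 : ∀ i, S i) i x,
          Function.update (0 : ∀ i, S i) i y} := hg ▸ Ideal.mem_span_singleton_self g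
      obtain ⟨a, b, hab⟩ := Ideal.mem_span_pair.1 this
      rw [SetLike.mem_coe, Ideal.mem_span_pair]
      exact ⟨a i, b i, by simpa using congrFun hab i⟩
  · intro H f g
    have key : ∀ i, ∃ h p q c d : S i,
        p * f i + q * g i = h ∧ c * h = f i ∧ d * h = g i := by
      intro i
      obtain ⟨h, hh⟩ := (H i (f i) (g i)).principal
      rw [Ideal.submodule_span_eq] at hh
      have h1 : h ∈ Ideal.span {f i, g i} := hh ▸ Ideal.mem_span_singleton_self h
      obtain ⟨p, q, hpq⟩ := Ideal.mem_span_pair.1 h1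
      have h2 : f i ∈ Ideal.span {h} := by
        rw [← hh]; exact Ideal.subset_span (by left; rfl)
      obtain ⟨c, hc⟩ := Ideal.mem_span_singleton'.1 h2
      have h3 : g i ∈ Ideal.span {h} := by
        rw [← hh]; exact Ideal.subset_span (by right; rfl)
      obtain ⟨d, hd⟩ := Ideal.mem_span_singleton'.1 h3
      exact ⟨h, p, q, c, d, hpq, hc, hd⟩
    choose h p q c d hpq hc hd using key
    refine ⟨⟨h, ?_⟩⟩
    rw [Ideal.submodule_span_eq]
    refine le_antisymm ?_ ?_
    · rw [Ideal.span_le]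
      rintro z (rfl | rfl)
      · exact Ideal.mem_span_singleton'.2 ⟨c, funext hc⟩
      · exact Ideal.mem_span_singleton'.2 ⟨d, funext hd⟩
    · rw [Ideal.span_le, Set.singleton_subset_iff, SetLike.mem_coe, Ideal.mem_span_pair]
      exact ⟨p, q, funext hpq⟩

lemma pi_body_iff :
    FecklyZeroAdequateBody (∀ i, S i) ↔ ∀ i, FecklyZeroAdequateBody (S i) := by
  classical
  constructor
  · intro H i a
    obtain ⟨r, s, hjac, ⟨x, y, hxy⟩, hdiv⟩ := H (Function.update (1 : ∀ i, S i) i a)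
    refine ⟨r i, s i, (pi_mem_jac_iff _).1 hjac i, ⟨x i, y i, by simpa using congrFun hxy i⟩, ?_⟩
    rintro s' ⟨c, hc⟩ hs' ⟨x', y', hxy'⟩
    refine hdiv (Function.update s i s') ⟨Function.update (1 : ∀ i, S i) i c, ?_⟩ ?_
      ⟨Function.update (0 : ∀ i, S i) i x', Function.update (1 : ∀ i, S i) i y', ?_⟩
    · funext j
      by_cases hj : j = i
      · subst hj; simp [hc]
      · simp [Function.update_of_ne hj]
    · intro hu
      exact hs' (by simpa using (pi_isUnit_iff _).1 hu i)
    · funext j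
      by_cases hj : j = i
      · subst hj; simp [hxy']
      · simp [Function.update_of_ne hj]
  · intro H a
    choose r s hjac hcom hdiv using fun i => H i (a i)
    choose x y hxy using hcom
    refine ⟨r, s, (pi_mem_jac_iff _).2 hjac, ⟨x, y, funext hxy⟩, ?_⟩
    rintro s' ⟨c, hc⟩ hs' ⟨x', y', hxy'⟩
    obtain ⟨i, hi⟩ : ∃ i, ¬IsUnit (s' i) := by
      by_contra h
      push_neg at h
      exact hs' ((pi_isUnit_iff _).2 h)
    exact hdiv i (s' i) ⟨c i, congrFun hc i⟩ hi ⟨x' i, y' i, congrFun hxy' i⟩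

end AuxPi

theorem stmt12 (ι : Type*) (R : ι → Type*) [∀ i, CommRing (R i)] :
    FecklyZeroAdequateRing (∀ i, R i) ↔ ∀ i, FecklyZeroAdequateRing (R i) := by
  rw [FecklyZeroAdequateRing, pi_isBezout_iff, pi_body_iff]
  constructor
  · rintro ⟨hb, hc⟩ i
    exact ⟨hb i, hc i⟩
  · intro h
    exact ⟨fun i => (h i).1, fun i => (h i).2⟩
end

section
/- Let R be a commutative Bézout ring. Then R is feckly zero-adequate if and only if for every a ∈ R there exists e ∈ R such that a - e is a unit, a*R ∩ e*R ⊆ J(R), and e - e^2 ∈ J(R). -/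
open Ideal

-- Auxiliary lemmas

private lemma jac_le_max {R : Type*} [CommRing R] {M : Ideal R} (hM : M.IsMaximal) :
    jacR R ≤ M :=
  sInf_le ⟨bot_le, hM⟩

private lemma mem_jac_iff {R : Type*} [CommRing R] {x : R} :
    x ∈ jacR R ↔ ∀ M : Ideal R, M.IsMaximal → x ∈ M := by
  constructor
  · intro hx M hM
    exact jac_le_max hM hx
  · intro h
    rw [jacR, Ideal.jacobson, Ideal.mem_sInf]
    rintro M ⟨-, hM⟩
    exact h M hM

private lemma isUnit_of_one_sub_mem_jac {R : Type*} [CommRing R] {j : R}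
    (hj : j ∈ jacR R) : IsUnit (1 - j) := by
  have := Ideal.mem_jacobson_bot.mp hj (-1)
  simpa [mul_comm, sub_eq_add_neg, add_comm] using this

theorem stmt13' (R : Type*) [CommRing R] [IsBezout R] :
    FecklyZeroAdequateBody R ↔
      ∀ a : R, ∃ e : R, IsUnit (a - e) ∧
        Ideal.span {a} ⊓ Ideal.span {e} ≤ jacR R ∧ e - e ^ 2 ∈ jacR R := by
  constructor
  · -- Forward direction
    intro H a
    obtain ⟨r, s, hrs, ⟨x, y, hxy⟩, hdiv⟩ := H a
    -- Step A : a * r ∈ J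
    have hark : a * r ∈ jacR R := by
      rw [mem_jac_iff]
      intro M hM
      by_cases hr : r ∈ M
      · exact M.mul_mem_left a hr
      have hs : s ∈ M :=
        (hM.isPrime.mem_or_mem (jac_le_max hM hrs)).resolve_left hr
      have ha : a ∈ M := by
        by_contra ha
        obtain ⟨c, m, hm, hcm⟩ := hM.exists_inv ha
        -- d := gcd s m
        set d := IsBezout.gcd s m with hd
        have hds : d ∣ s := IsBezout.gcd_dvd_left s m
        have hdm : d ∣ m := IsBezout.gcd_dvd_right s m
        obtain ⟨m₂, hm₂⟩ := hdm
        have hdu : IsUnit d := by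
          by_contra hdu
          exact hdiv d hds hdu ⟨m₂, c, by rw [← hm₂]; linear_combination hcm⟩
        -- but then 1 ∈ M, contradiction
        obtain ⟨α, β, hαβ⟩ := IsBezout.gcd_eq_sum s m
        obtain ⟨v, hv⟩ := hdu.exists_right_inv
        have hαβ' : α * s + β * m = d := by rw [hd]; exact hαβ
        have h1M : (1 : R) ∈ M := by
          have : (1 : R) = α * v * s + β * v * m := by
            linear_combination (-v) * hαβ' - hv
          rw [this]
          exact M.add_mem (M.mul_mem_left _ hs) (M.mul_mem_left _ hm)
        exact hM.ne_top ((Ideal.eq_top_iff_one M).mpr h1M)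
      exact M.mul_mem_right r ha
    -- Step B : a - a*a*y ∈ J
    have hk : a - a * a * y ∈ jacR R := by
      have h1 : a - a * a * y = (a * r) * x := by linear_combination -a * hxy
      rw [h1]
      exact Ideal.mul_mem_right _ _ hark
    -- Step C : take e := 1 - a*y
    refine ⟨1 - a * y, ?_, ?_, ?_⟩
    · -- a - e is a unit
      have key : (a - (1 - a * y)) * (y * a * y - (1 - a * y)) =
          1 - (a - a * a * y) * (1 + y) ^ 2 := by ring
      have hmem : (a - a * a * y) * (1 + y) ^ 2 ∈ jacR R :=
        Ideal.mul_mem_right _ _ hk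
      have := isUnit_of_one_sub_mem_jac hmem
      rw [← key] at this
      exact isUnit_of_mul_isUnit_left this
    · -- span a ⊓ span e ≤ J
      rintro t ⟨ht1, ht2⟩
      obtain ⟨p, hp⟩ := Ideal.mem_span_singleton.mp ht1
      obtain ⟨q, hq⟩ := Ideal.mem_span_singleton.mp ht2
      subst hp
      have : a * p = p * (a - a * a * y) + q * y * (a - a * a * y) := by
        linear_combination (y * a) * hq
      rw [this]
      exact Ideal.add_mem _ (Ideal.mul_mem_left _ _ hk) (Ideal.mul_mem_left _ _ hk)
    · -- e - e^2 ∈ J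
      have : (1 - a * y) - (1 - a * y) ^ 2 = y * (a - a * a * y) := by ring
      rw [this]
      exact Ideal.mul_mem_left _ _ hk
  · -- Backward direction
    intro H a
    obtain ⟨e, hu, hinf, hid⟩ := H a
    obtain ⟨u, hu'⟩ := hu
    set c : R := ↑u⁻¹ with hc
    have h1 : (a - e) * c = 1 := by
      rw [← hu']; exact u.mul_inv
    have j1 : a * e ∈ jacR R := by
      apply hinf
      exact ⟨Ideal.mem_span_singleton.mpr ⟨e, rfl⟩,
        Ideal.mem_span_singleton.mpr ⟨a, mul_comm a e⟩⟩
    have j2 : e - e ^ 2 ∈ jacR R := hid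
    refine ⟨e, 1 - e, ?_, ?_, ?_⟩
    · -- e * (1 - e) ∈ J
      have : e * (1 - e) = e - e ^ 2 := by ring
      rw [this]; exact j2
    · -- coprimality of e and a
      have hj : e + a * c - 1 ∈ jacR R := by
        have hid2 : e + a * c - 1 = c * ((e - e ^ 2) + a * e) := by
          linear_combination (1 - e) * h1
        rw [hid2]
        exact Ideal.mul_mem_left _ _ (Ideal.add_mem _ j2 j1)
      have hunit : IsUnit (e + a * c) := by
        have h3 := isUnit_of_one_sub_mem_jac (neg_mem hj)
        have h4 : 1 - -(e + a * c - 1) = e + a * c := by ring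
        rwa [h4] at h3
      obtain ⟨w, hw⟩ := hunit.exists_right_inv
      exact ⟨w, c * w, by linear_combination hw⟩
    · -- divisor condition
      rintro s' hdvd hnu ⟨x, y, hxy⟩
      apply hnu
      obtain ⟨t, ht⟩ := hdvd
      have hκ : a - (a - e) * (s' * t) ∈ jacR R := by
        have : a - (a - e) * (s' * t) = a * e + (e - e ^ 2) := by
          rw [← ht]; ring
        rw [this]
        exact Ideal.add_mem _ j1 j2
      have hunit : IsUnit (1 - (a - (a - e) * (s' * t)) * y) :=
        isUnit_of_one_sub_mem_jac (Ideal.mul_mem_right _ _ hκ)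
      have heq : s' * (x + (a - e) * t * y) = 1 - (a - (a - e) * (s' * t)) * y := by
        linear_combination hxy
      rw [← heq] at hunit
      exact isUnit_of_mul_isUnit_left hunit

theorem stmt13 (R : Type*) [CommRing R] [IsBezout R] :
    FecklyZeroAdequateBody R ↔
      ∀ a : R, ∃ e : R, IsUnit (a - e) ∧
        Ideal.span {a} ⊓ Ideal.span {e} ≤ jacR R ∧ e - e ^ 2 ∈ jacR R :=
  stmt13' R
end

section
/- Let R be a commutative Bézout ring. Then R is feckly zero-adequate if and only if whenever a*R + b*R = R with a, b ∈ R, there exists e ∈ R such that a + b*e is a unit, a*R ∩ e*R ⊆ J(R), and e - e^2 ∈ J(R). -/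
open Ideal

section Aux
variable {R : Type*} [CommRing R]

/-- Key: FZA implies the ring is von Neumann regular modulo the Jacobson radical. -/
lemma fza_vnr [IsBezout R] (h : FecklyZeroAdequateBody R) (a : R) :
    ∃ c : R, a - a ^ 2 * c ∈ jacR R := by
  obtain ⟨r, s, hrs, ⟨x, y, hxy⟩, hs⟩ := h a
  refine ⟨y, ?_⟩
  rw [jacR, Ideal.jacobson, Ideal.mem_sInf]
  rintro M ⟨-, hM⟩
  haveI := hM
  have hJM : jacR R ≤ M := sInf_le ⟨bot_le, hM⟩
  by_cases hsM : s ∈ M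
  · -- show a ∈ M
    have haM : a ∈ M := by
      by_contra haM
      obtain ⟨z, i, hiM, hzi⟩ := hM.exists_inv haM
      -- w := 1 - a * z = i ∈ M
      set w : R := 1 - a * z with hw
      have hwM : w ∈ M := by
        have : w = i := by rw [hw]; linear_combination -hzi
        rwa [this]
      -- d := gcd s w is a unit
      set d : R := IsBezout.gcd s w with hd
      have hds : d ∣ s := IsBezout.gcd_dvd_left s w
      have hdw : d ∣ w := IsBezout.gcd_dvd_right s w
      obtain ⟨m, hm⟩ := hdw
      have hdu : IsUnit d := by
        by_contra hdu
        exact hs d hds hdu ⟨m, z, by linear_combination -hm⟩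
      -- then 1 ∈ span {s, w} ≤ M, contradiction
      have : (1 : R) ∈ Ideal.span ({s, w} : Set R) := by
        rw [← IsBezout.span_gcd, Ideal.span_singleton_eq_top.mpr hdu]
        trivial
      obtain ⟨p, q, hpq⟩ := Ideal.mem_span_pair.mp this
      exact hM.ne_top (Ideal.eq_top_of_isUnit_mem M
        (show p * s + q * w ∈ M from M.add_mem (M.mul_mem_left p hsM) (M.mul_mem_left q hwM))
        (hpq ▸ isUnit_one))
    have : a - a ^ 2 * y = (1 - a * y) * a := by ring
    rw [this]; exact M.mul_mem_left _ haM
  · have h1 : s * (1 - a * y) ∈ M := by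
      have : s * (1 - a * y) = (r * s) * x := by linear_combination (-s) * hxy
      rw [this]; exact hJM (Ideal.mul_mem_right x _ hrs)
    have h2 : (1 - a * y) ∈ M := by
      rcases hM.isPrime.mem_or_mem h1 with h | h
      · exact absurd h hsM
      · exact h
    have : a - a ^ 2 * y = a * (1 - a * y) := by ring
    rw [this]; exact M.mul_mem_left a h2

/-- Converse: vN regular mod J implies FZA. -/
lemma vnr_fza (h : ∀ a : R, ∃ c : R, a - a ^ 2 * c ∈ jacR R) :
    FecklyZeroAdequateBody R := by
  intro a
  obtain ⟨c, hc⟩ := h a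
  refine ⟨1 - a * c, a, ?_, ⟨1, c, by ring⟩, ?_⟩
  · have : (1 - a * c) * a = a - a ^ 2 * c := by ring
    rwa [this]
  · rintro s' ⟨m, hm⟩ hs' ⟨x, y, hxy⟩
    exact hs' (IsUnit.of_mul_eq_one (a := s') (x + m * y) (by rw [hm] at hxy; linear_combination hxy))
end Aux

theorem stmt14 (R : Type*) [CommRing R] [IsBezout R] :
    FecklyZeroAdequateBody R ↔
      ∀ a b : R, (∃ x y : R, a * x + b * y = 1) →
        ∃ e : R, IsUnit (a + b * e) ∧
          Ideal.span {a} ⊓ Ideal.span {e} ≤ jacR R ∧ e - e ^ 2 ∈ jacR R := by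
  constructor
  · intro h a b ⟨x, y, hxy⟩
    obtain ⟨c, hc⟩ := fza_vnr h a
    refine ⟨1 - a * c, ?_, ?_, ?_⟩
    · -- a + b*(1-ac) is a unit
      have key : (a + b * (1 - a * c)) * (a * c ^ 2 + y * (1 - a * c)) =
          (a - a ^ 2 * c) * (y + b * c ^ 2 - 2 * c - x * (1 - a * c)) + 1 := by
        linear_combination (1 - a * c) ^ 2 * hxy
      have hj : (a - a ^ 2 * c) * (y + b * c ^ 2 - 2 * c - x * (1 - a * c)) ∈ jacR R :=
        Ideal.mul_mem_right _ _ hc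
      have := (Ideal.mem_jacobson_bot.mp hj) 1
      rw [mul_one] at this
      rw [← key] at this
      exact isUnit_of_mul_isUnit_left this
    · -- span a ⊓ span e ≤ J
      rintro z ⟨hz1, hz2⟩
      obtain ⟨p, hp⟩ := Ideal.mem_span_singleton'.mp hz1
      obtain ⟨q, hq⟩ := Ideal.mem_span_singleton'.mp hz2
      have : z = p * (a - a ^ 2 * c) + (q * c) * (a - a ^ 2 * c) := by
        linear_combination (-(1 - a * c)) * hp + (-(a * c)) * hq
      rw [this]
      exact Ideal.add_mem _ (Ideal.mul_mem_left _ _ hc) (Ideal.mul_mem_left _ _ hc)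
    · have : (1 - a * c) - (1 - a * c) ^ 2 = c * (a - a ^ 2 * c) := by ring
      rw [this]
      exact Ideal.mul_mem_left _ _ hc
  · intro h
    apply vnr_fza
    intro a
    obtain ⟨e, hu, hspan, -⟩ := h a 1 ⟨0, 1, by ring⟩
    rw [one_mul] at hu
    obtain ⟨u, hu'⟩ := hu
    have hae : a * e ∈ jacR R := hspan ⟨Ideal.mem_span_singleton'.mpr ⟨e, by ring⟩,
      Ideal.mem_span_singleton'.mpr ⟨a, by ring⟩⟩
    refine ⟨(↑u⁻¹ : R), ?_⟩
    have hv : (↑u⁻¹ : R) * (a + e) = 1 := by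
      rw [← hu']; exact u.inv_mul
    have : a - a ^ 2 * (↑u⁻¹ : R) = (a * e) * (↑u⁻¹ : R) - a * ((↑u⁻¹ : R) * (a + e) - 1) := by
      ring
    rw [this, hv]
    simp only [sub_self, mul_zero, sub_zero]
    exact Ideal.mul_mem_right _ _ hae
end

section
/- Let R be a commutative Bézout ring. Then R is zero-adequate if and only if for every a ∈ R there exists an idempotent e ∈ R such that a - e is a unit and a*R ∩ e*R ⊆ J(R). -/
open Ideal

theorem stmt15 (R : Type*) [CommRing R] [IsBezout R] :
    ZeroAdequateBody R ↔
      ∀ a : R, ∃ e : R, e * e = e ∧ IsUnit (a - e) ∧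
        Ideal.span {a} ⊓ Ideal.span {e} ≤ jacR R := by
  constructor
  · intro h a
    obtain ⟨r, s, hrs, ⟨x, y, hxy⟩, hscond⟩ := h a
    -- the gcd of r and s is a unit
    have hdr : IsBezout.gcd r s ∣ r := IsBezout.gcd_dvd_left r s
    have hds : IsBezout.gcd r s ∣ s := IsBezout.gcd_dvd_right r s
    have hdu : IsUnit (IsBezout.gcd r s) := by
      by_contra hdu
      obtain ⟨r', hr'⟩ := hdr
      exact hscond _ hds hdu ⟨r' * x, y, by linear_combination hxy - x * hr'⟩
    have h1 : (1 : R) ∈ Ideal.span ({r, s} : Set R) := by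
      rw [← IsBezout.span_gcd, Ideal.span_singleton_eq_top.mpr hdu]
      exact Submodule.mem_top
    obtain ⟨u, v, huv⟩ := Ideal.mem_span_pair.mp h1
    -- huv : u * r + v * s = 1
    refine ⟨u * r, ?_, ?_, ?_⟩
    · -- idempotent
      linear_combination (u * r) * huv - (u * v) * hrs
    · -- key fact : e * a ∈ J(R)
      have hJ : (u * r) * a ∈ jacR R := by
        rw [Ideal.mem_jacobson_bot]
        intro z
        by_contra hnu
        exact hscond ((u * r) * a * z + 1)
          ⟨s, by linear_combination (-(a * z * u)) * hrs⟩ hnu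
          ⟨1, -(u * r * z), by ring⟩
      -- a - e is a unit
      by_contra hne
      obtain ⟨m, hm, hmem⟩ := exists_max_ideal_of_mem_nonunits (mem_nonunits_iff.mpr hne)
      have hJm : jacR R ≤ m := sInf_le ⟨bot_le, hm⟩
      have hea : (u * r) * a ∈ m := hJm hJ
      have hboth : u * r ∈ m ∧ a ∈ m := by
        rcases hm.isPrime.mem_or_mem hea with h' | h'
        · exact ⟨h', by simpa using m.add_mem hmem h'⟩
        · exact ⟨by simpa using m.neg_mem (m.sub_mem hmem h'), h'⟩
      obtain ⟨hem, ham⟩ := hboth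
      have hrm : r ∉ m := by
        intro hrm
        have : (1 : R) ∈ m := by
          rw [← hxy]
          exact m.add_mem (Ideal.mul_mem_right _ _ hrm) (Ideal.mul_mem_right _ _ ham)
        exact hm.ne_top ((Ideal.eq_top_iff_one m).mpr this)
      have hsm : s ∈ m := by
        have : r * s ∈ m := by rw [hrs]; exact m.zero_mem
        rcases hm.isPrime.mem_or_mem this with h' | h'
        · exact absurd h' hrm
        · exact h'
      have : (1 : R) ∈ m := by
        rw [← huv]
        exact m.add_mem hem (Ideal.mul_mem_left _ _ hsm)
      exact hm.ne_top ((Ideal.eq_top_iff_one m).mpr this)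
    · -- intersection is in the radical
      have hJ : (u * r) * a ∈ jacR R := by
        rw [Ideal.mem_jacobson_bot]
        intro z
        by_contra hnu
        exact hscond ((u * r) * a * z + 1)
          ⟨s, by linear_combination (-(a * z * u)) * hrs⟩ hnu
          ⟨1, -(u * r * z), by ring⟩
      intro w hw
      obtain ⟨hw1, hw2⟩ := hw
      obtain ⟨p, hp⟩ := Ideal.mem_span_singleton.mp hw1
      obtain ⟨q, hq⟩ := Ideal.mem_span_singleton.mp hw2
      have he : (u * r) * (u * r) = u * r := by
        linear_combination (u * r) * huv - (u * v) * hrs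
      have key : w = ((u * r) * a) * p := by
        have h2 : (u * r) * w = w := by rw [hq, ← mul_assoc, he]
        calc w = (u * r) * w := h2.symm
          _ = ((u * r) * a) * p := by rw [hp]; ring
      rw [key]
      exact Ideal.mul_mem_right _ _ hJ
  · intro h a
    obtain ⟨e, he, hu, hint⟩ := h a
    refine ⟨e, 1 - e, by linear_combination -he, ?_, ?_⟩
    · obtain ⟨w, hw⟩ := hu
      refine ⟨-(↑w⁻¹ : R), (↑w⁻¹ : R), ?_⟩
      have h2 : (↑w⁻¹ : R) * ↑w = 1 := w.inv_mul
      linear_combination (-(↑w⁻¹ : R)) * hw + h2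
    · rintro s' ⟨t, ht⟩ hnu ⟨x, y, hxy⟩
      -- ht : 1 - e = s' * t
      have hae : a * e ∈ jacR R := by
        refine hint ⟨Ideal.mem_span_singleton.mpr ⟨e, rfl⟩,
          Ideal.mem_span_singleton.mpr ⟨a, mul_comm a e⟩⟩
      have hunit : IsUnit (a * e * (-y) + 1) := Ideal.mem_jacobson_bot.mp hae (-y)
      have hmul : s' * (x * e + t) = a * e * (-y) + 1 := by
        linear_combination e * hxy - ht
      exact hnu (isUnit_of_mul_isUnit_left (hmul ▸ hunit))
end

section
/- Let R be a commutative Bézout ring and let a ∈ R be feckly adequate. Then the quotient ring R/aR is feckly zero-adequate. -/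
open Ideal

lemma mk_mem_jac {R : Type*} [CommRing R] (I : Ideal R) {x : R} (hx : x ∈ jacR R) :
    Ideal.Quotient.mk I x ∈ jacR (R ⧸ I) := by
  rw [Ideal.mem_jacobson_bot] at hx ⊢
  intro y
  obtain ⟨y₀, rfl⟩ := Ideal.Quotient.mk_surjective y
  have := (hx y₀).map (Ideal.Quotient.mk I)
  simpa using this

theorem stmt16 (R : Type*) [CommRing R] [IsBezout R] (a : R)
    (h : FecklyAdequate a) :
    FecklyZeroAdequateRing (R ⧸ Ideal.span ({a} : Set R)) := by
  set I := Ideal.span ({a} : Set R) with hI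
  refine ⟨Function.Surjective.isBezout (Ideal.Quotient.mk I) Ideal.Quotient.mk_surjective, ?_⟩
  intro b
  obtain ⟨b₀, rfl⟩ := Ideal.Quotient.mk_surjective b
  obtain ⟨r, s, hj, ⟨x, y, hxy⟩, hs⟩ := h b₀
  have ha : (Ideal.Quotient.mk I) a = 0 := Ideal.Quotient.eq_zero_iff_mem.mpr
      (Ideal.subset_span (Set.mem_singleton a))
  refine ⟨Ideal.Quotient.mk I r, Ideal.Quotient.mk I s, ?_,
    ⟨Ideal.Quotient.mk I x, Ideal.Quotient.mk I y, by
      have := congrArg (Ideal.Quotient.mk I) hxy; simpa using this⟩, ?_⟩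
  · have h1 := mk_mem_jac I (x := a - r * s) hj
    rw [map_sub, _root_.map_mul, ha] at h1
    have h2 := neg_mem h1
    simpa using h2
  · rintro s' hdvd hnu ⟨x', y', hx'y'⟩
    obtain ⟨u, rfl⟩ := Ideal.Quotient.mk_surjective s'
    obtain ⟨p, rfl⟩ := Ideal.Quotient.mk_surjective x'
    obtain ⟨q, rfl⟩ := Ideal.Quotient.mk_surjective y'
    have hmem : u * p + b₀ * q - 1 ∈ I := by
      rw [← Ideal.Quotient.eq_zero_iff_mem]
      simp only [map_sub, map_add, _root_.map_mul, map_one, hx'y', sub_self]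
    rw [hI, Ideal.mem_span_singleton] at hmem
    obtain ⟨t, ht⟩ := hmem
    have hju : IsUnit ((a - r * s) * t + 1) := Ideal.mem_jacobson_bot.mp hj t
    obtain ⟨v, hv⟩ := hju
    have key2 : u * (p * ↑v⁻¹) + b₀ * (q * ↑v⁻¹) - r * s * t * ↑v⁻¹ = 1 := by
      have key : u * p + b₀ * q - r * s * t = (a - r * s) * t + 1 := by
        linear_combination ht
      have h3 : (u * p + b₀ * q - r * s * t) * ↑v⁻¹ = 1 := by
        rw [key, ← hv, Units.mul_inv]
      linear_combination h3
    set d := IsBezout.gcd u s with hd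
    obtain ⟨u', hu'⟩ : d ∣ u := IsBezout.gcd_dvd_left u s
    obtain ⟨s'', hs''⟩ : d ∣ s := IsBezout.gcd_dvd_right u s
    by_cases hdunit : IsUnit d
    · obtain ⟨α, β, hαβ⟩ := IsBezout.gcd_eq_sum u s
      obtain ⟨e, he⟩ := hdunit
      have h1 : u * (α * ↑e⁻¹) + s * (β * ↑e⁻¹) = 1 := by
        have h0 : (α * u + β * s) * ↑e⁻¹ = 1 := by rw [hαβ, ← hd, ← he, Units.mul_inv]
        linear_combination h0
      obtain ⟨c, hc⟩ := hdvd
      apply hnu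
      have h2 : Ideal.Quotient.mk I u * (Ideal.Quotient.mk I α * Ideal.Quotient.mk I (↑e⁻¹ : R)
          + c * (Ideal.Quotient.mk I β * Ideal.Quotient.mk I (↑e⁻¹ : R))) = 1 := by
        have h3 := congrArg (Ideal.Quotient.mk I) h1
        simp only [map_add, _root_.map_mul, map_one] at h3
        rw [hc] at h3
        linear_combination h3
      exact IsUnit.of_mul_eq_one _ h2
    · refine hs d ⟨s'', hs''⟩ hdunit
        ⟨u' * (p * ↑v⁻¹) - s'' * (r * t * ↑v⁻¹), q * ↑v⁻¹, ?_⟩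
      rw [hu', hs''] at key2
      linear_combination key2
end

section
/- Let R be a commutative Bézout domain. Then R is zero-adequate if and only if R is a local ring. -/
open Ideal

theorem stmt17 (R : Type*) [CommRing R] [IsDomain R] [IsBezout R] :
    ZeroAdequateBody R ↔ IsLocalRing R := by
  constructor
  · intro h
    apply IsLocalRing.of_isUnit_or_isUnit_one_sub_self
    intro a
    obtain ⟨r, s, hrs, ⟨x, y, hxy⟩, hs⟩ := h a
    rcases mul_eq_zero.mp hrs with hr | hs0
    · left
      exact IsUnit.of_mul_eq_one (a := a) y (by rw [hr] at hxy; linear_combination hxy)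
    · right
      by_contra hu
      exact hs (1 - a) (hs0 ▸ dvd_zero _) hu ⟨1, 1, by ring⟩
  · intro hloc a
    by_cases ha : IsUnit a
    · refine ⟨0, 1, by ring, ⟨0, ↑ha.unit⁻¹, by simp [IsUnit.mul_val_inv]⟩, ?_⟩
      intro s' hdvd hu _
      exact hu (isUnit_of_dvd_one hdvd)
    · refine ⟨1, 0, by ring, ⟨1, 0, by ring⟩, ?_⟩
      rintro s' _ hu ⟨x, y, hxy⟩
      rcases IsLocalRing.isUnit_or_isUnit_of_add_one hxy with h1 | h2
      · exact hu (isUnit_of_mul_isUnit_left h1)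
      · exact ha (isUnit_of_mul_isUnit_left h2)
end

section
/- Let R be a commutative ring and a, b, c, r ∈ R with (b + a*r)*R + c*R = R. Then the 2×2 matrix [[a, b], [0, c]] admits a diagonal reduction: there exist invertible 2×2 matrices P and Q over R such that P * [[a, b], [0, c]] * Q = [[1, 0], [0, -a*c]]. -/
open Ideal

theorem stmt18 (R : Type*) [CommRing R] (a b c r : R)
    (h : ∃ x y : R, (b + a * r) * x + c * y = 1) :
    ∃ P Q : (Matrix (Fin 2) (Fin 2) R)ˣ,
      (P : Matrix (Fin 2) (Fin 2) R) * !![a, b; 0, c] * (Q : Matrix (Fin 2) (Fin 2) R) =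
        !![1, 0; 0, -(a * c)] := by
  obtain ⟨x, y, hxy⟩ := h
  refine ⟨⟨!![x, y; -c, b + a * r], !![b + a * r, -y; c, x], ?_, ?_⟩,
          ⟨!![r, 1 - r * x * a; 1, -(x * a)], !![x * a, 1 - r * x * a; 1, -r], ?_, ?_⟩, ?_⟩ <;>
    · show _ = _
      ext i j
      fin_cases i <;> fin_cases j <;>
        simp [Matrix.mul_apply, Fin.sum_univ_two] <;>
        first
        | ring1
        | linear_combination hxy
        | linear_combination -hxy
        | linear_combination x * a * hxy
        | linear_combination (-(x * a)) * hxy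
end
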